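/- arXiv:1410.1501 — 3 statements merged into one kernel-verified Lean document; each statement's English description precedes it below -/
import Mathlib

section
/- Let X be a length space, σ a point of its metric completion X̄, ε > 0, δ > 0 with 3δ < ε, and x, y ∈ X with d(x, σ) < ε − 3δ and d(y, σ) < ε − 3δ. Then there exists z ∈ X with d(z, σ) < δ and there exist curves in X from x to z and from y to z each of length at most ε − δ, all of whose points lie within distance ε of σ. -/
open Set Metric UniformSpace

/-- Quantitative core of path-connectedness of balls around singularities:
there is a point `z` close to `σ` and curves in `X` from `x` and `y` to `z` of
length at most `ε - δ`, all of whose points stay within distance `ε` of `σ`. -/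
theorem stmt_3 {X : Type*} [MetricSpace X]
    (hlen : ∀ x y : X, ∀ η > (0:ℝ), ∃ γ : ℝ → X,
      ContinuousOn γ (Icc 0 1) ∧ γ 0 = x ∧ γ 1 = y ∧
      eVariationOn γ (Icc 0 1) ≤ ENNReal.ofReal (dist x y + η))
    (σ : Completion X)
    (hσ : σ ∈ closure (Set.range ((↑) : X → Completion X)))
    (ε δ : ℝ) (hε : 0 < ε) (hδ : 0 < δ) (hδε : 3 * δ < ε)
    (x y : X) (hx : dist (x : Completion X) σ < ε - 3 * δ)
    (hy : dist (y : Completion X) σ < ε - 3 * δ) :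
    ∃ z : X, dist (z : Completion X) σ < δ ∧
      (∃ γ : ℝ → X, ContinuousOn γ (Icc 0 1) ∧ γ 0 = x ∧ γ 1 = z ∧
        eVariationOn γ (Icc 0 1) ≤ ENNReal.ofReal (ε - δ) ∧
        ∀ t ∈ Icc (0:ℝ) 1, dist ((γ t : Completion X)) σ ≤ ε) ∧
      (∃ γ : ℝ → X, ContinuousOn γ (Icc 0 1) ∧ γ 0 = y ∧ γ 1 = z ∧
        eVariationOn γ (Icc 0 1) ≤ ENNReal.ofReal (ε - δ) ∧
        ∀ t ∈ Icc (0:ℝ) 1, dist ((γ t : Completion X)) σ ≤ ε) := by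

  obtain ⟨b, ⟨z, rfl⟩, hzσ⟩ := Metric.mem_closure_iff.1 hσ δ hδ
  rw [dist_comm] at hzσ
  have hεδ : (0:ℝ) ≤ ε - δ := by linarith
  have key : ∀ w : X, dist (w : Completion X) σ < ε - 3 * δ →
      ∃ γ : ℝ → X, ContinuousOn γ (Icc 0 1) ∧ γ 0 = w ∧ γ 1 = z ∧
        eVariationOn γ (Icc 0 1) ≤ ENNReal.ofReal (ε - δ) ∧
        ∀ t ∈ Icc (0:ℝ) 1, dist ((γ t : Completion X)) σ ≤ ε := by
    intro w hw
    obtain ⟨γ, hcont, h0, h1, hvar⟩ := hlen w z δ hδ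
    have hdwz : dist w z < ε - 2 * δ := by
      have := Completion.dist_eq w z
      calc dist w z = dist (w : Completion X) (z : Completion X) := this.symm
        _ ≤ dist (w : Completion X) σ + dist (z : Completion X) σ := dist_triangle_right _ _ _
        _ < (ε - 3 * δ) + δ := add_lt_add hw hzσ
        _ = ε - 2 * δ := by ring
    have hvar' : eVariationOn γ (Icc 0 1) ≤ ENNReal.ofReal (ε - δ) := by
      refine hvar.trans (ENNReal.ofReal_le_ofReal ?_)
      linarith
    refine ⟨γ, hcont, h0, h1, hvar', fun t ht => ?_⟩
    have hedist : edist (γ t) z ≤ ENNReal.ofReal (ε - δ) := by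
      have := eVariationOn.edist_le γ ht (by constructor <;> norm_num : (1:ℝ) ∈ Icc (0:ℝ) 1)
      rw [h1] at this
      exact this.trans hvar'
    have hd : dist (γ t) z ≤ ε - δ := by
      rwa [edist_le_ofReal hεδ] at hedist
    calc dist ((γ t : Completion X)) σ
        ≤ dist ((γ t : Completion X)) (z : Completion X) + dist (z : Completion X) σ :=
          dist_triangle _ _ _
      _ ≤ (ε - δ) + δ := by
          rw [Completion.dist_eq]
          exact add_le_add hd hzσ.le
      _ = ε := by ring
  exact ⟨z, hzσ, key x hx, key y hy⟩
end

section
/- Let X be a path-connected topological space, C ⊆ X a closed set, and N an open neighborhood of C such that every path in X from a point outside N to another point outside N that meets C must enter both path-components N_l and N_r of N \ C. If every two points of X \ C can be joined by a path in X, and there is a path δ in X \ C from a point of N_l to a point of N_r, and N_l and N_r are path-connected, then any two points x₁, x₂ ∈ X \ C can be joined by a path in X \ C. -/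
open Set

/-- A subsegment of a path, as a `JoinedIn` statement: if `p.extend` maps
`[a, b] ⊆ [0, 1]` into `F`, then the endpoints are joined in `F`. -/
lemma seg_joinedIn {X : Type*} [TopologicalSpace X] {x y : X} (p : Path x y)
    {a b : ℝ} (ha : 0 ≤ a) (hab : a ≤ b) (hb : b ≤ 1) {F : Set X}
    (h : ∀ t : ℝ, a ≤ t → t ≤ b → p.extend t ∈ F) :
    JoinedIn F (p.extend a) (p.extend b) := by
  refine ⟨⟨⟨fun t : unitInterval => p.extend (a + (b - a) * t), ?_⟩, ?_, ?_⟩, ?_⟩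
  · exact p.continuous_extend.comp
      (continuous_const.add (continuous_const.mul continuous_subtype_val))
  · simp
  · simp
  · intro t
    have ht0 := t.2.1
    have ht1 := t.2.2
    exact h _ (by nlinarith) (by nlinarith)

/-- Rerouting criterion: if every path between points outside `N` that meets `C`
must enter both sides `Nl` and `Nr` of `N \ C`, both sides are path-connected,
and there is a left-to-right path `δ` in `X \ C` from `Nl` to `Nr`, then any two
points of `X \ C` are joined by a path in `X \ C`. -/
theorem stmt_11 {X : Type*} [TopologicalSpace X] [PathConnectedSpace X]
    (C : Set X) (hC : IsClosed C) (N : Set X) (hN : IsOpen N) (hCN : C ⊆ N)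
    (Nl Nr : Set X)
    (hunion : Nl ∪ Nr = N \ C) (hdisj : Disjoint Nl Nr)
    (hNl : IsPathConnected Nl) (hNr : IsPathConnected Nr)
    (hcross : ∀ (x y : X), x ∉ N → y ∉ N → ∀ p : Path x y,
      (∃ t, p t ∈ C) → (∃ t, p t ∈ Nl) ∧ (∃ t, p t ∈ Nr))
    (hjoin : ∀ x y : X, Joined x y)
    (hδ : ∃ xl ∈ Nl, ∃ xr ∈ Nr, JoinedIn Cᶜ xl xr) :
    ∀ x₁ ∈ Cᶜ, ∀ x₂ ∈ Cᶜ, JoinedIn Cᶜ x₁ x₂ := by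
  -- Any two points of Nl ∪ Nr are joined in Cᶜ.
  have hsubl : Nl ⊆ Cᶜ := fun z hz => ((hunion ▸ (Or.inl hz : z ∈ Nl ∪ Nr)) : z ∈ N \ C).2
  have hsubr : Nr ⊆ Cᶜ := fun z hz => ((hunion ▸ (Or.inr hz : z ∈ Nl ∪ Nr)) : z ∈ N \ C).2
  obtain ⟨xl, hxl, xr, hxr, hδ'⟩ := hδ
  have sides : ∀ a ∈ Nl ∪ Nr, ∀ b ∈ Nl ∪ Nr, JoinedIn Cᶜ a b := by
    intro a ha b hb
    have lr : JoinedIn Cᶜ xl xr := hδ'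
    rcases ha with ha | ha <;> rcases hb with hb | hb
    · exact (hNl.joinedIn a ha b hb).mono hsubl
    · exact (((hNl.joinedIn a ha xl hxl).mono hsubl).trans lr).trans
        ((hNr.joinedIn xr hxr b hb).mono hsubr)
    · exact ((((hNr.joinedIn a ha xr hxr).mono hsubr).trans lr.symm)).trans
        ((hNl.joinedIn xl hxl b hb).mono hsubl)
    · exact (hNr.joinedIn a ha b hb).mono hsubr
  intro x₁ hx₁ x₂ hx₂
  obtain ⟨p⟩ := hjoin x₁ x₂
  -- The set of times where p meets C.
  set T : Set ℝ := {t : ℝ | t ∈ Icc (0:ℝ) 1 ∧ p.extend t ∈ C} with hT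
  by_cases hTne : T.Nonempty
  swap
  · -- p avoids C entirely
    refine ⟨p, fun t => ?_⟩
    intro htC
    exact hTne ⟨t, ⟨t.2.1, t.2.2⟩, by rwa [p.extend_extends' t]⟩
  · have hTclosed : IsClosed T := by
      exact (isClosed_Icc.inter (hC.preimage p.continuous_extend))
    have hTcompact : IsCompact T := (isCompact_Icc).of_isClosed_subset hTclosed (fun t ht => ht.1)
    set t₀ := sInf T with ht₀def
    set t₁ := sSup T with ht₁def
    have ht₀T : t₀ ∈ T := hTclosed.csInf_mem hTne hTcompact.bddBelow
    have ht₁T : t₁ ∈ T := hTclosed.csSup_mem hTne hTcompact.bddAbove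
    have ht₀pos : 0 < t₀ := by
      rcases lt_or_eq_of_le ht₀T.1.1 with h | h
      · exact h
      · exfalso; apply hx₁; rw [← h] at ht₀T
        have := ht₀T.2; rwa [p.extend_zero] at this
    have ht₁lt : t₁ < 1 := by
      rcases lt_or_eq_of_le ht₁T.1.2 with h | h
      · exact h
      · exfalso; apply hx₂; rw [h] at ht₁T
        have := ht₁T.2; rwa [p.extend_one] at this
    -- find s just before t₀ with p.extend s ∈ N \ C
    have hNnhds₀ : (p.extend) ⁻¹' N ∈ nhds t₀ :=
      (hN.preimage p.continuous_extend).mem_nhds (by exact hCN ht₀T.2)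
    obtain ⟨ε, hε, hball⟩ := Metric.mem_nhds_iff.mp hNnhds₀
    set s := max (t₀ / 2) (t₀ - ε / 2) with hsdef
    have hs_lt : s < t₀ := max_lt (by linarith) (by linarith)
    have hs_nonneg : 0 ≤ s := le_trans (by linarith) (le_max_left _ _)
    have hs_N : p.extend s ∈ N := by
      apply hball
      simp only [Metric.mem_ball, Real.dist_eq, abs_lt]
      constructor
      · have : t₀ - ε / 2 ≤ s := le_max_right _ _
        linarith
      · linarith
    have hs_notT : s ∉ T := fun h => absurd (csInf_le hTcompact.bddBelow h) (not_le.mpr hs_lt)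
    have hs_mem : p.extend s ∈ N \ C := by
      refine ⟨hs_N, fun hc => hs_notT ⟨⟨hs_nonneg, le_trans hs_lt.le ht₀T.1.2⟩, hc⟩⟩
    -- find s' just after t₁ with p.extend s' ∈ N \ C
    have hNnhds₁ : (p.extend) ⁻¹' N ∈ nhds t₁ :=
      (hN.preimage p.continuous_extend).mem_nhds (by exact hCN ht₁T.2)
    obtain ⟨ε', hε', hball'⟩ := Metric.mem_nhds_iff.mp hNnhds₁
    set s' := min ((t₁ + 1) / 2) (t₁ + ε' / 2) with hs'def
    have hs'_gt : t₁ < s' := lt_min (by linarith) (by linarith)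
    have hs'_le1 : s' ≤ 1 := le_trans (min_le_left _ _) (by linarith)
    have hs'_N : p.extend s' ∈ N := by
      apply hball'
      simp only [Metric.mem_ball, Real.dist_eq, abs_lt]
      constructor
      · linarith
      · have : s' ≤ t₁ + ε' / 2 := min_le_right _ _
        linarith
    have hs'_notT : s' ∉ T := fun h => absurd (le_csSup hTcompact.bddAbove h) (not_le.mpr hs'_gt)
    have hs'_mem : p.extend s' ∈ N \ C := by
      refine ⟨hs'_N, fun hc => hs'_notT ⟨⟨le_trans ht₁T.1.1 hs'_gt.le, hs'_le1⟩, hc⟩⟩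
    -- x₁ joined to p.extend s in Cᶜ
    have j1 : JoinedIn Cᶜ x₁ (p.extend s) := by
      have := seg_joinedIn p (le_refl (0:ℝ)) hs_nonneg
        (le_trans hs_lt.le ht₀T.1.2) (F := Cᶜ) (fun t ht0 hts => by
          intro hc
          have : t ∈ T := ⟨⟨ht0, le_trans hts (le_trans hs_lt.le ht₀T.1.2)⟩, hc⟩
          exact absurd (csInf_le hTcompact.bddBelow this) (not_le.mpr (lt_of_le_of_lt hts hs_lt)))
      rwa [p.extend_zero] at this
    -- p.extend s' joined to x₂ in Cᶜ
    have j2 : JoinedIn Cᶜ (p.extend s') x₂ := by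
      have := seg_joinedIn p (le_trans ht₁T.1.1 hs'_gt.le) hs'_le1 (le_refl (1:ℝ))
        (F := Cᶜ) (fun t hts ht1 => by
          intro hc
          have : t ∈ T := ⟨⟨le_trans (le_trans ht₁T.1.1 hs'_gt.le) hts, ht1⟩, hc⟩
          exact absurd (le_csSup hTcompact.bddAbove this)
            (not_le.mpr (lt_of_lt_of_le hs'_gt hts)))
      rwa [p.extend_one] at this
    -- middle via sides
    have jm : JoinedIn Cᶜ (p.extend s) (p.extend s') :=
      sides _ (hunion ▸ hs_mem) _ (hunion ▸ hs'_mem)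
    exact (j1.trans jm).trans j2
end

section
/- Let R ⊆ ℝ² be closed and nonempty, γ̃ : (0, l) → ℝ² a unit-speed line segment, and put ir(t) = d(γ̃(t), R). Suppose r₁, r₂ ∈ R are distinct, t₁ ∈ T_{r₁}, t₂ ∈ T_{r₂} with t₁ < t₂ (where T_r = { t : ‖γ̃(t) − r‖ = ir(t) }), and suppose that for every t ∈ (t₁, t₂) and every r ∈ R, ‖γ̃(t) − r‖ ≥ min(‖γ̃(t) − r₁‖, ‖γ̃(t) − r₂‖). Then T_{r₁} ∪ T_{r₂} ⊇ [t₁, t₂], and since T_{r₁}, T_{r₂} are closed and [t₁, t₂] is connected, T_{r₁} ∩ T_{r₂} ∩ [t₁, t₂] ≠ ∅. -/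
open Set Metric

/-- If `r₁` realizes the distance at time `t₁` and `r₂` at time `t₂`, and at
every intermediate time the distance to any point of `R` is at least the
minimum of the distances to `r₁` and `r₂`, then the realization-time sets
`T_{r₁}`, `T_{r₂}` cover `[t₁, t₂]` and intersect there. -/
theorem stmt_14 (a v : EuclideanSpace ℝ (Fin 2)) (hv : ‖v‖ = 1) (l : ℝ)
    (R : Set (EuclideanSpace ℝ (Fin 2))) (hR : IsClosed R) (hRne : R.Nonempty)
    (r₁ r₂ : EuclideanSpace ℝ (Fin 2)) (hr₁ : r₁ ∈ R) (hr₂ : r₂ ∈ R)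
    (hr : r₁ ≠ r₂) (t₁ t₂ : ℝ) (ht : t₁ < t₂)
    (ht₁ : t₁ ∈ Ioo (0:ℝ) l) (ht₂ : t₂ ∈ Ioo (0:ℝ) l)
    (hT₁ : ‖(a + t₁ • v) - r₁‖ = infDist (a + t₁ • v) R)
    (hT₂ : ‖(a + t₂ • v) - r₂‖ = infDist (a + t₂ • v) R)
    (hmin : ∀ t ∈ Ioo t₁ t₂, ∀ r ∈ R,
      min ‖(a + t • v) - r₁‖ ‖(a + t • v) - r₂‖ ≤ ‖(a + t • v) - r‖) :
    Icc t₁ t₂ ⊆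
      ({t : ℝ | t ∈ Ioo (0:ℝ) l ∧ ‖(a + t • v) - r₁‖ = infDist (a + t • v) R} ∪
       {t : ℝ | t ∈ Ioo (0:ℝ) l ∧ ‖(a + t • v) - r₂‖ = infDist (a + t • v) R}) ∧
    ∃ t₀ ∈ Icc t₁ t₂,
      ‖(a + t₀ • v) - r₁‖ = infDist (a + t₀ • v) R ∧
      ‖(a + t₀ • v) - r₂‖ = infDist (a + t₀ • v) R := by
  -- Icc t₁ t₂ ⊆ Ioo 0 l
  have hIoo : Icc t₁ t₂ ⊆ Ioo (0:ℝ) l := fun t htm =>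
    ⟨lt_of_lt_of_le ht₁.1 htm.1, lt_of_le_of_lt htm.2 ht₂.2⟩
  -- key: at every t in Icc, one of r₁, r₂ realizes the inf distance
  have key : ∀ t ∈ Icc t₁ t₂,
      ‖(a + t • v) - r₁‖ = infDist (a + t • v) R ∨
      ‖(a + t • v) - r₂‖ = infDist (a + t • v) R := by
    intro t htm
    rcases eq_or_lt_of_le htm.1 with h1 | h1
    · left; rw [← h1]; exact hT₁
    rcases eq_or_lt_of_le htm.2 with h2 | h2
    · right; rw [h2]; exact hT₂
    have hio : t ∈ Ioo t₁ t₂ := ⟨h1, h2⟩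
    have hle1 : infDist (a + t • v) R ≤ ‖(a + t • v) - r₁‖ := by
      rw [← dist_eq_norm]; exact infDist_le_dist_of_mem hr₁
    have hle2 : infDist (a + t • v) R ≤ ‖(a + t • v) - r₂‖ := by
      rw [← dist_eq_norm]; exact infDist_le_dist_of_mem hr₂
    have hge : min ‖(a + t • v) - r₁‖ ‖(a + t • v) - r₂‖ ≤ infDist (a + t • v) R := by
      by_contra h
      push_neg at h
      obtain ⟨r, hrm, hlt⟩ := (infDist_lt_iff hRne).1 h
      rw [dist_eq_norm] at hlt
      exact absurd (hmin t hio r hrm) (not_le.2 hlt)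
    rcases min_cases ‖(a + t • v) - r₁‖ ‖(a + t • v) - r₂‖ with ⟨hm, _⟩ | ⟨hm, _⟩
    · left; exact le_antisymm (hm ▸ hge) hle1
    · right; exact le_antisymm (hm ▸ hge) hle2
  constructor
  · intro t htm
    rcases key t htm with h | h
    · exact Or.inl ⟨hIoo htm, h⟩
    · exact Or.inr ⟨hIoo htm, h⟩
  · -- connectedness argument
    have hc1 : IsClosed {t : ℝ | ‖(a + t • v) - r₁‖ = infDist (a + t • v) R} := by
      apply isClosed_eq
      · exact Continuous.norm ((continuous_const.add (continuous_id.smul continuous_const)).sub continuous_const)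
      · exact (continuous_infDist_pt R).comp (continuous_const.add (continuous_id.smul continuous_const))
    have hc2 : IsClosed {t : ℝ | ‖(a + t • v) - r₂‖ = infDist (a + t • v) R} := by
      apply isClosed_eq
      · exact Continuous.norm ((continuous_const.add (continuous_id.smul continuous_const)).sub continuous_const)
      · exact (continuous_infDist_pt R).comp (continuous_const.add (continuous_id.smul continuous_const))
    have hconn := isPreconnected_Icc (a := t₁) (b := t₂)
    have := isPreconnected_closed_iff.1 hconn _ _ hc1 hc2
      (fun t htm => key t htm)
      ⟨t₁, ⟨le_refl _, le_of_lt ht⟩, hT₁⟩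
      ⟨t₂, ⟨le_of_lt ht, le_refl _⟩, hT₂⟩
    rcases this with ⟨t₀, ht₀, h₁, h₂⟩
    exact ⟨t₀, ht₀, h₁, h₂⟩
end
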